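/- arXiv:1912.11502 — 2 statements merged into one kernel-verified Lean document; each statement's English description precedes it below -/
import Mathlib

section
/- Two forests have a common expansion if and only if they have the same number of roots. In particular, any two trees have a common expansion. -/
/-- Finite rooted binary trees. -/
inductive T : Type
  | leaf : T
  | node : T → T → T
  deriving DecidableEq

/-- A caret is the tree with two leaves. -/
def caret : T := T.node T.leaf T.leaf

/-- The number of leaves of a tree. -/
def T.leaves : T → ℕ
  | .leaf => 1
  | .node l r => l.leaves + r.leaves

/-- The total number of leaves of a forest (list of trees); the leaves are
ordered left to right. -/
def leavesList (f : List T) : ℕ := (f.map T.leaves).sum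

/-- Replace the `k`-th (`0`-indexed, left to right) leaf of a tree with a caret. -/
def T.expandAt : T → ℕ → T
  | .leaf, _ => caret
  | .node l r, k =>
      if k < l.leaves then .node (l.expandAt k) r
      else .node l (r.expandAt (k - l.leaves))

/-- The `k`-th simple expansion of a forest: replace its `k`-th (`0`-indexed,
left to right) leaf with a caret. -/
def expandListAt : List T → ℕ → List T
  | [], _ => []
  | t :: ts, k =>
      if k < t.leaves then t.expandAt k :: ts
      else t :: expandListAt ts (k - t.leaves)

/-- `Expands f' f` means that `f'` is an expansion of `f`, i.e. `f'` is obtained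
from `f` by applying finitely many simple expansions. -/
inductive Expands : List T → List T → Prop
  | refl (f : List T) : Expands f f
  | step {g f : List T} (k : ℕ) (hk : k < leavesList g) (h : Expands g f) :
      Expands (expandListAt g k) f

/-- The trivial forest `1_n` with `n` roots. -/
def trivialForest (n : ℕ) : List T := List.replicate n T.leaf

section Aux

lemma T.leaves_pos (t : T) : 0 < t.leaves := by
  induction t with
  | leaf => simp [T.leaves]
  | node l r ihl ihr => simp [T.leaves]; omega

lemma leavesList_cons (t : T) (ts : List T) :
    leavesList (t :: ts) = t.leaves + leavesList ts := by simp [leavesList]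

lemma leavesList_append (a b : List T) :
    leavesList (a ++ b) = leavesList a + leavesList b := by simp [leavesList]

lemma leavesList_singleton (t : T) : leavesList [t] = t.leaves := by simp [leavesList]

lemma expandListAt_append_left (a b : List T) (k : ℕ) (hk : k < leavesList a) :
    expandListAt (a ++ b) k = expandListAt a k ++ b := by
  induction a generalizing k with
  | nil => simp [leavesList] at hk
  | cons t ts ih =>
    by_cases h : k < t.leaves
    · simp [expandListAt, h]
    · rw [leavesList_cons] at hk
      simp only [List.cons_append, expandListAt, if_neg h, List.append_eq]
      rw [ih _ (by omega)]

lemma expandListAt_append_right (a b : List T) (k : ℕ) :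
    expandListAt (a ++ b) (leavesList a + k) = a ++ expandListAt b k := by
  induction a with
  | nil => simp [leavesList]
  | cons t ts ih =>
    rw [leavesList_cons]
    have h : ¬ (t.leaves + leavesList ts + k < t.leaves) := by omega
    simp only [List.cons_append, expandListAt, if_neg h, List.append_eq]
    have : t.leaves + leavesList ts + k - t.leaves = leavesList ts + k := by omega
    rw [this, ih]

lemma length_expandListAt (g : List T) (k : ℕ) (hk : k < leavesList g) :
    (expandListAt g k).length = g.length := by
  induction g generalizing k with
  | nil => simp [expandListAt]
  | cons t ts ih =>
    rw [leavesList_cons] at hk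
    by_cases h : k < t.leaves
    · simp [expandListAt, h]
    · simp only [expandListAt, if_neg h, List.length_cons]
      rw [ih _ (by omega)]

lemma Expands.trans' {f g h : List T} (h1 : Expands g f) (h2 : Expands h g) :
    Expands h f := by
  induction h2 with
  | refl => exact h1
  | step k hk _ ih => exact .step k hk (ih h1)

lemma Expands.length_eq {f g : List T} (h : Expands g f) : g.length = f.length := by
  induction h with
  | refl => rfl
  | step k hk _ ih => rw [length_expandListAt _ _ hk, ih]

lemma expands_append_left (x : List T) {f g : List T} (h : Expands g f) :
    Expands (g ++ x) (f ++ x) := by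
  induction h with
  | refl => exact .refl _
  | step k hk _ ih =>
    rw [← expandListAt_append_left _ x _ hk]
    exact .step k (by rw [leavesList_append]; omega) ih

lemma expands_append_right (x : List T) {f g : List T} (h : Expands g f) :
    Expands (x ++ g) (x ++ f) := by
  induction h with
  | refl => exact .refl _
  | step k hk _ ih =>
    rw [← expandListAt_append_right x _ k]
    exact .step _ (by rw [leavesList_append]; omega) ih

lemma expands_append {a b c d : List T} (h1 : Expands a b) (h2 : Expands c d) :
    Expands (a ++ c) (b ++ d) :=
  (expands_append_right b h2).trans' (expands_append_left c h1)

lemma expands_singleton {g : List T} (h : g.length = 1) : ∃ s, g = [s] :=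
  List.length_eq_one_iff.mp h

lemma expands_node_left {l' l : T} (r : T) (h : Expands [l'] [l]) :
    Expands [T.node l' r] [T.node l r] := by
  suffices H : ∀ g f, Expands g f → ∀ l0 l1, g = [l1] → f = [l0] →
      Expands [T.node l1 r] [T.node l0 r] from H _ _ h l l' rfl rfl
  intro g f hg
  induction hg with
  | refl =>
    rintro l0 l1 rfl h
    cases h
    exact .refl _
  | @step g f k hk hexp ih =>
    rintro l0 l1 hl1 rfl
    obtain ⟨s, rfl⟩ := expands_singleton (by simpa using hexp.length_eq)
    rw [leavesList_singleton] at hk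
    have he : expandListAt [s] k = [s.expandAt k] := by simp [expandListAt, hk]
    rw [he] at hl1
    cases hl1
    have h1 : Expands [T.node s r] [T.node l0 r] := ih l0 s rfl rfl
    have h2 : expandListAt [T.node s r] k = [T.node (s.expandAt k) r] := by
      have : k < (T.node s r).leaves := by simp [T.leaves]; omega
      simp [expandListAt, this, T.expandAt, hk]
    rw [← h2]
    exact .step k (by rw [leavesList_singleton]; simp [T.leaves]; omega) h1

lemma expands_node_right {r' r : T} (l : T) (h : Expands [r'] [r]) :
    Expands [T.node l r'] [T.node l r] := by
  suffices H : ∀ g f, Expands g f → ∀ r0 r1, g = [r1] → f = [r0] →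
      Expands [T.node l r1] [T.node l r0] from H _ _ h r r' rfl rfl
  intro g f hg
  induction hg with
  | refl =>
    rintro r0 r1 rfl h
    cases h
    exact .refl _
  | @step g f k hk hexp ih =>
    rintro r0 r1 hr1 rfl
    obtain ⟨s, rfl⟩ := expands_singleton (by simpa using hexp.length_eq)
    rw [leavesList_singleton] at hk
    have he : expandListAt [s] k = [s.expandAt k] := by simp [expandListAt, hk]
    rw [he] at hr1
    cases hr1
    have h1 : Expands [T.node l s] [T.node l r0] := ih r0 s rfl rfl
    have h2 : expandListAt [T.node l s] (l.leaves + k) = [T.node l (s.expandAt k)] := by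
      have h3 : ¬ (l.leaves + k < l.leaves) := by omega
      have h4 : l.leaves + k < (T.node l s).leaves := by simp [T.leaves]; omega
      simp [expandListAt, h4, T.expandAt, h3]
    rw [← h2]
    exact .step _ (by rw [leavesList_singleton]; simp [T.leaves]; omega) h1

lemma expands_of_leaf (s : T) : Expands [s] [T.leaf] := by
  induction s with
  | leaf => exact .refl _
  | node l r ihl ihr =>
    have h0 : Expands [caret] [T.leaf] := by
      have : expandListAt [T.leaf] 0 = [caret] := by
        simp [expandListAt, T.leaves, T.expandAt]
      rw [← this]
      exact .step 0 (by simp [leavesList, T.leaves]) (.refl _)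
    have h1 : Expands [T.node l T.leaf] [caret] := expands_node_left _ ihl
    have h2 : Expands [T.node l r] [T.node l T.leaf] := expands_node_right _ ihr
    exact (h0.trans' h1).trans' h2

inductive TLe : T → T → Prop
  | leaf (s) : TLe T.leaf s
  | node {a b c d} : TLe a c → TLe b d → TLe (T.node a b) (T.node c d)

lemma TLe.refl (t : T) : TLe t t := by
  induction t with
  | leaf => exact .leaf _
  | node l r ihl ihr => exact .node ihl ihr

lemma expands_of_tle {t s : T} (h : TLe t s) : Expands [s] [t] := by
  induction h with
  | leaf s => exact expands_of_leaf s
  | @node a b c d _ _ ih1 ih2 =>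
    exact (expands_node_left b ih1).trans' (expands_node_right c ih2)

def joinT : T → T → T
  | T.leaf, s => s
  | T.node a b, T.leaf => T.node a b
  | T.node a b, T.node c d => T.node (joinT a c) (joinT b d)

lemma tle_joinT_left (t u : T) : TLe t (joinT t u) := by
  induction t generalizing u with
  | leaf => exact .leaf _
  | node a b iha ihb =>
    cases u with
    | leaf => exact TLe.refl _
    | node c d => exact .node (iha c) (ihb d)

lemma tle_joinT_right (t u : T) : TLe u (joinT t u) := by
  induction t generalizing u with
  | leaf => exact TLe.refl _
  | node a b iha ihb =>
    cases u with
    | leaf => exact .leaf _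
    | node c d => exact .node (iha c) (ihb d)

lemma zip_expands : ∀ f g : List T, f.length = g.length →
    Expands (List.zipWith joinT f g) f ∧ Expands (List.zipWith joinT f g) g := by
  intro f
  induction f with
  | nil =>
    intro g hg
    have : g = [] := by simpa using hg.symm
    subst this
    exact ⟨.refl _, .refl _⟩
  | cons t ts ih =>
    intro g hg
    cases g with
    | nil => simp at hg
    | cons u us =>
      have hg' : ts.length = us.length := by simpa using hg
      obtain ⟨h1, h2⟩ := ih us hg'
      constructor
      · exact expands_append (c := List.zipWith joinT ts us)
          (expands_of_tle (tle_joinT_left t u)) h1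
      · exact expands_append (c := List.zipWith joinT ts us)
          (expands_of_tle (tle_joinT_right t u)) h2

end Aux
/-- Two forests have a common expansion if and only if they have the same number
of roots.  In particular, any two trees have a common expansion. -/
theorem common_expansion_iff_same_roots :
    (∀ f g : List T, f ≠ [] → g ≠ [] →
      ((∃ h : List T, Expands h f ∧ Expands h g) ↔ f.length = g.length)) ∧
    (∀ t u : T, ∃ h : List T, Expands h [t] ∧ Expands h [u]) := by
  constructor
  · intro f g _ _
    constructor
    · rintro ⟨h, h1, h2⟩
      rw [← h1.length_eq, ← h2.length_eq]
    · intro hlen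
      obtain ⟨h1, h2⟩ := zip_expands f g hlen
      exact ⟨_, h1, h2⟩
  · intro t u
    obtain ⟨h1, h2⟩ := zip_expands [t] [u] rfl
    exact ⟨_, h1, h2⟩
end

section
/- If n ≥ 2 and n ≡ 2 (mod 3), then the geometric realization |M(L_n)| of the matching complex of the linear graph L_n is a contractible topological space. -/
/-- Matchings of the linear graph `L n` (vertex set `{1, …, n}`, edges `{i, i+1}`),
with the edge `{i, i+1}` identified with its index `i ∈ {1, …, n-1}`: a finite set
`M` of indices in `{1, …, n-1}` such that no two of the corresponding edges share
a vertex. -/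
def IsMatchingIdx (n : ℕ) (M : Finset ℕ) : Prop :=
  (∀ i ∈ M, 1 ≤ i ∧ i + 1 ≤ n) ∧
  ∀ i ∈ M, ∀ j ∈ M, i ≠ j → i + 1 ≠ j ∧ j + 1 ≠ i

/-- The geometric realization `|M(L n)|` of the matching complex of `L n`:
the union, over all nonempty matchings `M` of `L n`, of the convex hulls of the
corresponding sets of standard basis vectors (with the subspace topology). -/
def matchRealization (n : ℕ) : Set (ℕ → ℝ) :=
  ⋃ M ∈ {M : Finset ℕ | IsMatchingIdx n M ∧ M ≠ ∅},
    convexHull ℝ ((fun i => Pi.single i (1 : ℝ)) '' (M : Set ℕ))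

/-- `ν(n) = ⌊(n-2)/3⌋`. -/
def nuMatch (n : ℕ) : ℕ := (n - 2) / 3


/-- conflict between edge indices of the path. -/
def Confl (i j : ℕ) : Prop := i + 1 = j ∨ j + 1 = i

lemma Confl.symm {i j : ℕ} (h : Confl i j) : Confl j i := h.elim Or.inr Or.inl

def IsMatch (M : Finset ℕ) : Prop := ∀ i ∈ M, ∀ j ∈ M, i ≠ j → ¬ Confl i j

/-- realization of the independence complex restricted to vertex set `S`. -/
def Yil (S : Finset ℕ) : Set (ℕ → ℝ) :=
  ⋃ M ∈ {M : Finset ℕ | M ⊆ S ∧ IsMatch M ∧ M.Nonempty},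
    convexHull ℝ ((fun i => Pi.single i (1 : ℝ)) '' (M : Set ℕ))

lemma mem_hull_iff (M : Finset ℕ) (x : ℕ → ℝ) :
    x ∈ convexHull ℝ ((fun i => Pi.single i (1 : ℝ)) '' (M : Set ℕ)) ↔
      (∀ u, 0 ≤ x u) ∧ (∑ i ∈ M, x i = 1) ∧ (∀ u, u ∉ M → x u = 0) := by
  constructor
  · intro hx
    have hconv : Convex ℝ {y : ℕ → ℝ |
        (∀ u, 0 ≤ y u) ∧ (∑ i ∈ M, y i = 1) ∧ (∀ u, u ∉ M → y u = 0)} := by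
      intro a ha b hb s t hs ht hst
      refine ⟨fun u => ?_, ?_, fun u hu => ?_⟩
      · have : (s • a + t • b) u = s * a u + t * b u := rfl
        rw [this]
        exact add_nonneg (mul_nonneg hs (ha.1 u)) (mul_nonneg ht (hb.1 u))
      · have : ∀ i, (s • a + t • b) i = s * a i + t * b i := fun _ => rfl
        simp only [this, Finset.sum_add_distrib, ← Finset.mul_sum, ha.2.1, hb.2.1]
        ring_nf
        linarith
      · have : (s • a + t • b) u = s * a u + t * b u := rfl
        rw [this, ha.2.2 u hu, hb.2.2 u hu]; ring
    have hsub : (fun i => Pi.single i (1 : ℝ)) '' (M : Set ℕ) ⊆ {y : ℕ → ℝ |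
        (∀ u, 0 ≤ y u) ∧ (∑ i ∈ M, y i = 1) ∧ (∀ u, u ∉ M → y u = 0)} := by
      rintro _ ⟨i, hi, rfl⟩
      refine ⟨fun u => ?_, ?_, fun u hu => ?_⟩
      · show (0:ℝ) ≤ (Pi.single i (1:ℝ) : ℕ → ℝ) u
        rw [Pi.single_apply]; split_ifs <;> norm_num
      · have h' : ∀ j ∈ M, (Pi.single i (1:ℝ) : ℕ → ℝ) j = if j = i then 1 else 0 :=
          fun j _ => Pi.single_apply i (1:ℝ) j
        show (∑ j ∈ M, (Pi.single i (1:ℝ) : ℕ → ℝ) j) = 1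
        rw [Finset.sum_congr rfl h', Finset.sum_ite_eq' M i (fun _ => (1:ℝ))]
        simp only [Finset.mem_coe] at hi
        rw [if_pos hi]
      · show (Pi.single i (1:ℝ) : ℕ → ℝ) u = 0
        rw [Pi.single_apply, if_neg]; rintro rfl; exact hu hi
    exact convexHull_min hsub hconv hx
  · rintro ⟨h0, h1, h2⟩
    have key : M.centerMass x (fun i => Pi.single i (1:ℝ)) ∈
        convexHull ℝ ((fun i => Pi.single i (1 : ℝ)) '' (M : Set ℕ)) := by
      refine Finset.centerMass_mem_convexHull M (fun i _ => h0 i) (by rw [h1]; norm_num)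
        (fun i hi => Set.mem_image_of_mem _ hi)
    have : M.centerMass x (fun i => Pi.single i (1:ℝ)) = x := by
      rw [Finset.centerMass_eq_of_sum_1 _ _ h1]
      funext u
      rw [Finset.sum_apply]
      have : ∀ i ∈ M, (x i • (Pi.single i (1:ℝ) : ℕ → ℝ)) u = if i = u then x i else 0 := by
        intro i _
        have h5 : (x i • (Pi.single i (1:ℝ) : ℕ → ℝ)) u = x i * (Pi.single i (1:ℝ) : ℕ → ℝ) u := rfl
        rw [h5, Pi.single_apply]
        split_ifs with h h' h'
        · ring
        · exact absurd h.symm h'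
        · exact absurd h'.symm h
        · ring
      rw [Finset.sum_congr rfl this, Finset.sum_ite_eq' M u x]
      split_ifs with h
      · rfl
      · exact (h2 u h).symm
    rwa [this] at key

lemma mem_Yil_iff (S : Finset ℕ) (x : ℕ → ℝ) :
    x ∈ Yil S ↔ ∃ M : Finset ℕ, M ⊆ S ∧ IsMatch M ∧ M.Nonempty ∧
      (∀ u, 0 ≤ x u) ∧ (∑ i ∈ M, x i = 1) ∧ (∀ u, u ∉ M → x u = 0) := by
  constructor
  · intro hx
    rw [Yil, Set.mem_iUnion₂] at hx
    obtain ⟨M, hM, hx⟩ := hx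
    rw [mem_hull_iff] at hx
    exact ⟨M, hM.1, hM.2.1, hM.2.2, hx⟩
  · rintro ⟨M, h1, h2, h3, h4⟩
    rw [Yil, Set.mem_iUnion₂]
    exact ⟨M, ⟨h1, h2, h3⟩, (mem_hull_iff M x).2 h4⟩

noncomputable def foldMap (v w : ℕ) (x : ℕ → ℝ) : ℕ → ℝ :=
  fun u => if u = v then 0 else if u = w then x w + x v else x u

lemma foldMap_continuous (v w : ℕ) : Continuous (foldMap v w) := by
  refine continuous_pi fun u => ?_
  unfold foldMap
  split_ifs
  · exact continuous_const
  · exact (continuous_apply w).add (continuous_apply v)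
  · exact continuous_apply u

lemma Yil_mono {S T : Finset ℕ} (h : S ⊆ T) : Yil S ⊆ Yil T := by
  intro x hx
  rw [mem_Yil_iff] at hx ⊢
  obtain ⟨M, h1, h2⟩ := hx
  exact ⟨M, h1.trans h, h2⟩

lemma fold_core (S : Finset ℕ) (v w : ℕ) (hw : w ∈ S) (hvw : v ≠ w)
    (hcw : ¬ Confl w v)
    (hdom : ∀ u ∈ S, u ≠ v → Confl w u → Confl v u)
    {x : ℕ → ℝ} (hx : x ∈ Yil S) :
    (∀ t : ℝ, 0 ≤ t → t ≤ 1 → ((1-t) • x + t • foldMap v w x) ∈ Yil S) ∧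
      foldMap v w x ∈ Yil (S.erase v) := by
  rw [mem_Yil_iff] at hx
  obtain ⟨M, hMS, hM, hMne, h0, h1, h2⟩ := hx
  by_cases hxv : x v = 0
  · have hFx : foldMap v w x = x := by
      funext u
      unfold foldMap
      split_ifs with hu huw
      · rw [hu, hxv]
      · rw [huw, hxv]; ring
      · rfl
    have hxerase : x ∈ Yil (S.erase v) := by
      obtain ⟨u, hu, huv⟩ : ∃ u ∈ M, u ≠ v := by
        by_contra hcon
        push_neg at hcon
        have hMv : M = {v} := by
          apply Finset.eq_singleton_iff_nonempty_unique_mem.2 ⟨hMne, hcon⟩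
        rw [hMv, Finset.sum_singleton, hxv] at h1
        exact absurd h1 (by norm_num)
      rw [mem_Yil_iff]
      refine ⟨M.erase v, Finset.erase_subset_erase v hMS,
        fun i hi j hj => hM i (Finset.mem_of_mem_erase hi) j (Finset.mem_of_mem_erase hj),
        ⟨u, Finset.mem_erase.2 ⟨huv, hu⟩⟩, h0, ?_, fun u' hu' => ?_⟩
      · by_cases hvM : v ∈ M
        · have := Finset.sum_erase_add M x hvM
          rw [hxv] at this
          linarith [h1 ▸ this]
        · rw [Finset.erase_eq_of_notMem hvM]; exact h1
      · by_cases hv' : u' = v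
        · rw [hv']; exact hxv
        · exact h2 u' fun hm => hu' (Finset.mem_erase.2 ⟨hv', hm⟩)
    constructor
    · intro t ht0 ht1
      rw [hFx]
      have : (1-t) • x + t • x = ((1-t)+t) • x := (add_smul _ _ x).symm
      rw [this]
      simpa using Yil_mono (le_refl S) ((mem_Yil_iff S x).2 ⟨M, hMS, hM, hMne, h0, h1, h2⟩)
    · rw [hFx]; exact hxerase
  · -- x v ≠ 0, so v ∈ M
    have hvM : v ∈ M := by
      by_contra h
      exact hxv (h2 v h)
    have hvS := hMS hvM
    set N := insert w M with hN
    have hvN : v ∈ N := Finset.mem_insert_of_mem hvM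
    have hwN : w ∈ N := Finset.mem_insert_self w M
    have hNS : N ⊆ S := Finset.insert_subset hw hMS
    have matchN : IsMatch N := by
      intro i hi j hj hij hc
      rcases Finset.mem_insert.1 hi with hiw | hiM
      · rcases Finset.mem_insert.1 hj with hjw | hjM
        · exact hij (hiw.trans hjw.symm)
        · subst hiw
          by_cases hjv : j = v
          · subst hjv; exact hcw hc
          · exact hM v hvM j hjM (Ne.symm hjv) (hdom j (hMS hjM) hjv hc)
      · rcases Finset.mem_insert.1 hj with hjw | hjM
        · subst hjw
          by_cases hiv : i = v
          · subst hiv; exact hcw (hc.elim Or.inr Or.inl)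
          · exact hM v hvM i hiM (Ne.symm hiv)
              (hdom i (hMS hiM) hiv (hc.elim Or.inr Or.inl))
        · exact hM i hiM j hjM hij hc
    set c : ℕ → ℝ := fun u => if u = v then (-1:ℝ) else if u = w then 1 else 0 with hc
    set y : ℝ → ℕ → ℝ := fun t u => x u + (t * x v) * c u with hy
    have heq : ∀ t : ℝ, (1-t) • x + t • foldMap v w x = y t := by
      intro t
      funext u
      show (1-t) * x u + t * foldMap v w x u = x u + (t * x v) * c u
      unfold foldMap
      rw [hc]
      simp only
      split_ifs with ha hb
      · rw [ha]; ring
      · rw [hb]; ring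
      · ring
    have sumcN : ∑ u ∈ N, c u = 0 := by
      rw [← Finset.sum_erase_add N c hvN]
      have : ∀ u ∈ N.erase v, c u = if u = w then 1 else 0 := by
        intro u hu
        rw [hc]
        simp only [if_neg (Finset.mem_erase.1 hu).1]
      rw [Finset.sum_congr rfl this, Finset.sum_ite_eq' (N.erase v) w (fun _ => (1:ℝ)),
        if_pos (Finset.mem_erase.2 ⟨(Ne.symm hvw), hwN⟩)]
      show (1:ℝ) + c v = 0
      rw [hc]; simp
    have sumxN : ∑ u ∈ N, x u = 1 := by
      by_cases hwM : w ∈ M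
      · rw [hN, Finset.insert_eq_self.2 hwM]; exact h1
      · rw [hN, Finset.sum_insert hwM, h2 w hwM, zero_add]; exact h1
    have sumyN : ∀ t : ℝ, ∑ u ∈ N, y t u = 1 := by
      intro t
      rw [hy]
      simp only
      rw [Finset.sum_add_distrib, ← Finset.mul_sum, sumcN, sumxN]
      ring
    have ynn : ∀ t : ℝ, 0 ≤ t → t ≤ 1 → ∀ u, 0 ≤ y t u := by
      intro t ht0 ht1 u
      rw [hy, hc]
      simp only
      split_ifs with ha hb
      · rw [ha]; nlinarith [h0 v]
      · nlinarith [h0 u, h0 v]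
      · nlinarith [h0 u]
    have yout : ∀ t : ℝ, ∀ u, u ∉ N → y t u = 0 := by
      intro t u hu
      have huw : u ≠ w := fun h => hu (h ▸ hwN)
      have huM : u ∉ M := fun h => hu (Finset.mem_insert_of_mem h)
      have huv : u ≠ v := fun h => hu (h ▸ hvN)
      rw [hy, hc]
      simp only [if_neg huv, if_neg huw, h2 u huM]
      ring
    constructor
    · intro t ht0 ht1
      rw [heq t, mem_Yil_iff]
      exact ⟨N, hNS, matchN, ⟨w, hwN⟩, ynn t ht0 ht1, sumyN t, yout t⟩
    · have hF1 : foldMap v w x = y 1 := by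
        have := heq 1
        rw [sub_self, zero_smul, zero_add, one_smul] at this
        exact this
      rw [hF1, mem_Yil_iff]
      have hy1v : y 1 v = 0 := by rw [hy, hc]; simp
      refine ⟨N.erase v, Finset.erase_subset_erase v hNS,
        fun i hi j hj => matchN i (Finset.mem_of_mem_erase hi) j (Finset.mem_of_mem_erase hj),
        ⟨w, Finset.mem_erase.2 ⟨Ne.symm hvw, hwN⟩⟩, ynn 1 zero_le_one le_rfl, ?_, ?_⟩
      · have := Finset.sum_erase_add N (y 1) hvN
        rw [hy1v, add_zero] at this
        rw [this]; exact sumyN 1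
      · intro u hu
        by_cases huv : u = v
        · rw [huv]; exact hy1v
        · refine yout 1 u fun hN' => hu (Finset.mem_erase.2 ⟨huv, hN'⟩)

lemma fold_null (S : Finset ℕ) (v w : ℕ) (hw : w ∈ S) (hvw : v ≠ w)
    (hcw : ¬ Confl w v)
    (hdom : ∀ u ∈ S, u ≠ v → Confl w u → Confl v u)
    (ih : (ContinuousMap.id ↥(Yil (S.erase v))).Nullhomotopic) :
    (ContinuousMap.id ↥(Yil S)).Nullhomotopic := by
  have hsub : Yil (S.erase v) ⊆ Yil S := Yil_mono (Finset.erase_subset v S)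
  let r : C(↥(Yil S), ↥(Yil (S.erase v))) :=
    ⟨fun a => ⟨foldMap v w a.1, (fold_core S v w hw hvw hcw hdom a.2).2⟩,
      ((foldMap_continuous v w).comp continuous_subtype_val).subtype_mk _⟩
  let ι : C(↥(Yil (S.erase v)), ↥(Yil S)) :=
    ⟨fun a => ⟨a.1, hsub a.2⟩, continuous_subtype_val.subtype_mk _⟩
  have H : (ContinuousMap.id ↥(Yil S)).Homotopic (ι.comp r) := by
    refine ⟨⟨⟨fun p => ⟨(1 - (p.1 : ℝ)) • (p.2 : ℕ → ℝ) + (p.1 : ℝ) • foldMap v w p.2,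
      (fold_core S v w hw hvw hcw hdom p.2.2).1 p.1 p.1.2.1 p.1.2.2⟩, ?_⟩, ?_, ?_⟩⟩
    · refine Continuous.subtype_mk ?_ _
      have hc1 : Continuous fun p : ↥unitInterval × ↥(Yil S) => (p.1 : ℝ) :=
        continuous_subtype_val.comp continuous_fst
      have hc2 : Continuous fun p : ↥unitInterval × ↥(Yil S) => (p.2 : ℕ → ℝ) :=
        continuous_subtype_val.comp continuous_snd
      exact ((continuous_const.sub hc1).smul hc2).add
        (hc1.smul ((foldMap_continuous v w).comp hc2))
    · intro a
      apply Subtype.ext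
      show (1 - ((0 : ↥unitInterval) : ℝ)) • (a : ℕ → ℝ) + ((0 : ↥unitInterval) : ℝ) • _ = _
      simp
    · intro a
      apply Subtype.ext
      show (1 - ((1 : ↥unitInterval) : ℝ)) • (a : ℕ → ℝ) +
        ((1 : ↥unitInterval) : ℝ) • foldMap v w a = foldMap v w a
      simp
  obtain ⟨y, hy⟩ := ih
  have inner : ((ContinuousMap.id _).comp r).Homotopic
      ((ContinuousMap.const _ y).comp r) := ContinuousMap.Homotopic.comp hy (ContinuousMap.Homotopic.refl r)
  have outer := ContinuousMap.Homotopic.comp (ContinuousMap.Homotopic.refl ι) inner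
  simp only [ContinuousMap.id_comp, ContinuousMap.comp_const] at outer
  refine ⟨ι y, H.trans ?_⟩
  have : ι.comp ((ContinuousMap.const _ y).comp r) = ContinuousMap.const _ (ι y) := by
    ext a; rfl
  rwa [this] at outer

lemma singleton_null (z : ℕ) : (ContinuousMap.id ↥(Yil {z})).Nullhomotopic := by
  have hmem : Pi.single z (1:ℝ) ∈ Yil {z} := by
    rw [mem_Yil_iff]
    refine ⟨{z}, le_refl _, fun i hi j hj hij => absurd ((Finset.mem_singleton.1 hi).trans
      (Finset.mem_singleton.1 hj).symm) hij, ⟨z, Finset.mem_singleton_self z⟩,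
      fun u => ?_, ?_, fun u hu => ?_⟩
    · show (0:ℝ) ≤ (Pi.single z (1:ℝ) : ℕ → ℝ) u
      rw [Pi.single_apply]; split_ifs <;> norm_num
    · rw [Finset.sum_singleton]
      show (Pi.single z (1:ℝ) : ℕ → ℝ) z = 1
      simp
    · show (Pi.single z (1:ℝ) : ℕ → ℝ) u = 0
      rw [Pi.single_apply, if_neg (Finset.notMem_singleton.1 hu)]
  have huniq : ∀ x ∈ Yil {z}, x = Pi.single z 1 := by
    intro x hx
    rw [mem_Yil_iff] at hx
    obtain ⟨M, hMS, -, hMne, -, h1, h2⟩ := hx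
    have hMz : M = {z} := by
      rcases Finset.subset_singleton_iff.1 hMS with h | h
      · rw [h] at hMne; exact absurd hMne Finset.not_nonempty_empty
      · exact h
    subst hMz
    rw [Finset.sum_singleton] at h1
    funext u
    show x u = (Pi.single z (1:ℝ) : ℕ → ℝ) u
    rw [Pi.single_apply]
    split_ifs with h
    · rw [h]; exact h1
    · exact h2 u (Finset.notMem_singleton.2 h)
  refine ⟨⟨Pi.single z 1, hmem⟩, ?_⟩
  have : (ContinuousMap.id ↥(Yil {z})) =
      ContinuousMap.const _ (⟨Pi.single z 1, hmem⟩ : ↥(Yil {z})) :=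
    ContinuousMap.ext fun a => Subtype.ext (huniq a.1 a.2)
  rw [this]

lemma phase2 : ∀ (N : ℕ) (T : Finset ℕ) (z : ℕ), T.card ≤ N → z ∈ T →
    (∀ u ∈ T, ¬ Confl u z) →
    (ContinuousMap.id ↥(Yil T)).Nullhomotopic := by
  intro N
  induction N with
  | zero =>
    intro T z hcard hz _
    have := Finset.card_pos.2 ⟨z, hz⟩
    omega
  | succ N ihN =>
    intro T z hcard hz hiso
    by_cases hT : T = {z}
    · rw [hT]; exact singleton_null z
    · obtain ⟨v, hvT, hvz⟩ : ∃ v ∈ T, v ≠ z := by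
        by_contra h
        push_neg at h
        exact hT (Finset.eq_singleton_iff_nonempty_unique_mem.2 ⟨⟨z, hz⟩, h⟩)
      refine fold_null T v z hz hvz (fun hc => hiso v hvT (hc.elim Or.inr Or.inl))
        (fun u huT _ hc => absurd (hc.elim Or.inr Or.inl) (hiso u huT)) ?_
      refine ihN (T.erase v) z ?_ (Finset.mem_erase.2 ⟨Ne.symm hvz, hz⟩)
        (fun u hu => hiso u (Finset.mem_of_mem_erase hu))
      have := Finset.card_erase_of_mem hvT
      omega

def Bset (k j : ℕ) : Finset ℕ :=
  Finset.Icc 1 (3*k+1) \ (Finset.Icc 1 j).image (fun i => 3*i)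

lemma Bset_mem (k j u : ℕ) :
    u ∈ Bset k j ↔ 1 ≤ u ∧ u ≤ 3*k+1 ∧ ∀ i, 1 ≤ i → i ≤ j → u ≠ 3*i := by
  simp only [Bset, Finset.mem_sdiff, Finset.mem_Icc, Finset.mem_image, not_exists, not_and]
  constructor
  · rintro ⟨⟨h1, h2⟩, h3⟩
    exact ⟨h1, h2, fun i hi1 hi2 hne => h3 i ⟨hi1, hi2⟩ hne.symm⟩
  · rintro ⟨h1, h2, h3⟩
    exact ⟨⟨h1, h2⟩, fun i hi hne => h3 i hi.1 hi.2 hne.symm⟩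

lemma phase1 (k : ℕ) : ∀ d j, j + d = k →
    (ContinuousMap.id ↥(Yil (Bset k j))).Nullhomotopic := by
  intro d
  induction d with
  | zero =>
    intro j hj
    subst hj
    rw [Nat.add_zero] at *
    refine phase2 (Bset j j).card (Bset j j) (3*j+1) le_rfl
      ((Bset_mem j j (3*j+1)).2 ⟨by omega, by omega, fun i hi1 hi2 => by omega⟩) ?_
    intro u hu hc
    rw [Bset_mem] at hu
    obtain ⟨h1, h2, h3⟩ := hu
    by_cases hk : 1 ≤ j
    · have := h3 j hk le_rfl
      rcases hc with h | h <;> omega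
    · rcases hc with h | h <;> omega
  | succ d ihd =>
    intro j hj
    have hjk : j < k := by omega
    have herase : (Bset k j).erase (3*j+3) = Bset k (j+1) := by
      ext u
      rw [Finset.mem_erase, Bset_mem, Bset_mem]
      constructor
      · rintro ⟨hne, h1, h2, h3⟩
        refine ⟨h1, h2, fun i hi1 hi2 => ?_⟩
        by_cases hij : i ≤ j
        · exact h3 i hi1 hij
        · have : i = j + 1 := by omega
          subst this
          omega
      · rintro ⟨h1, h2, h3⟩
        have := h3 (j+1) (by omega) le_rfl
        exact ⟨by omega, h1, h2, fun i hi1 hi2 => h3 i hi1 (by omega)⟩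
    refine fold_null (Bset k j) (3*j+3) (3*j+1)
      ((Bset_mem k j (3*j+1)).2 ⟨by omega, by omega, fun i hi1 hi2 => by omega⟩)
      (by omega) (by rintro (h | h) <;> omega) ?_ ?_
    · intro u hu hne hc
      rw [Bset_mem] at hu
      obtain ⟨h1, h2, h3⟩ := hu
      rcases hc with h | h
      · -- 3j+2 = u
        exact Or.inr (by omega)
      · -- u + 1 = 3j+1, u = 3j
        by_cases hj0 : 1 ≤ j
        · have := h3 j hj0 le_rfl
          omega
        · omega
    · rw [herase]
      exact ihd (j+1) (by omega)

lemma match_eq (n : ℕ) (hn : 1 ≤ n) :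
    matchRealization n = Yil (Finset.Icc 1 (n-1)) := by
  ext x
  rw [matchRealization, Yil, Set.mem_iUnion₂, Set.mem_iUnion₂]
  constructor
  · rintro ⟨M, ⟨⟨hb, hm⟩, hne⟩, hx⟩
    refine ⟨M, ⟨fun i hi => Finset.mem_Icc.2 ⟨(hb i hi).1, by have := (hb i hi).2; omega⟩,
      fun i hi j hj hij hc => ?_, Finset.nonempty_iff_ne_empty.2 hne⟩, hx⟩
    rcases hc with h | h
    · exact (hm i hi j hj hij).1 h
    · exact (hm i hi j hj hij).2 h
  · rintro ⟨M, ⟨hb, hm, hne⟩, hx⟩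
    refine ⟨M, ⟨⟨fun i hi => ?_, fun i hi j hj hij => ?_⟩,
      Finset.nonempty_iff_ne_empty.1 hne⟩, hx⟩
    · have := Finset.mem_Icc.1 (hb hi)
      omega
    · exact ⟨fun h => hm i hi j hj hij (Or.inl h), fun h => hm i hi j hj hij (Or.inr h)⟩

/-- If `n ≥ 2` and `n ≡ 2 (mod 3)` then `|M(L n)|` is contractible. -/
theorem matching_complex_contractible (n : ℕ) (hn : 2 ≤ n) (hmod : n % 3 = 2) :
    ContractibleSpace (matchRealization n) := by
  have hB : Bset (n/3) 0 = Finset.Icc 1 (n-1) := by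
    rw [Bset, Finset.Icc_eq_empty (by omega : ¬ (1:ℕ) ≤ 0), Finset.image_empty,
      Finset.sdiff_empty]
    have : 3 * (n/3) + 1 = n - 1 := by omega
    rw [this]
  have heq : matchRealization n = Yil (Bset (n/3) 0) := by
    rw [match_eq n (by omega), hB]
  rw [heq]
  exact (contractible_iff_id_nullhomotopic _).mpr (phase1 (n/3) (n/3) 0 (by omega))
end
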